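/- arXiv:1807.06862 — 5 statements merged into one kernel-verified Lean document; each statement's English description precedes it below -/
import Mathlib

section
/- The map f ↦ C_f := {(x,y) ∈ 𝕀² | f^∨(x) ≤ y ≤ f^∧(x)} is a bijection from the set ℒ∨(𝕀) of join-continuous functions 𝕀 → 𝕀 onto the set of maximal chains of 𝕀², with inverse given by C ↦ f_C^- where f_C^-(x) := ⨅{y | (x,y) ∈ C}. -/
noncomputable section

instance : Fact ((0:ℝ) ≤ 1) := ⟨zero_le_one⟩

/-- `𝕀` is the real unit interval `[0,1]`, a complete lattice. -/
notation "𝕀" => unitInterval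

/-- `f^∧(x) = ⨅_{x < x'} f x'`, the meet-continuous closure data of `f`. -/
def mCl (f : 𝕀 → 𝕀) : 𝕀 → 𝕀 :=
  fun x => ⨅ y : {y : 𝕀 // x < y}, f y.1

/-- `f^∨(x) = ⨆_{x' < x} f x'`, the join-continuous closure data of `f`. -/
def jCl (f : 𝕀 → 𝕀) : 𝕀 → 𝕀 :=
  fun x => ⨆ y : {y : 𝕀 // y.1 < x}, f y.1

/-- `f` is join-continuous: it preserves all suprema. -/
def JoinCont (f : 𝕀 → 𝕀) : Prop :=
  ∀ S : Set 𝕀, f (sSup S) = ⨆ x ∈ S, f x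

/-- `f` is meet-continuous: it preserves all infima. -/
def MeetCont (f : 𝕀 → 𝕀) : Prop :=
  ∀ S : Set 𝕀, f (sInf S) = ⨅ x ∈ S, f x

/-- The right adjoint `f^ρ` of a join-continuous `f`. -/
def radj (f : 𝕀 → 𝕀) : 𝕀 → 𝕀 := fun y => sSup {x | f x ≤ y}

/-- The left adjoint `g^λ` of a meet-continuous `g`. -/
def ladj (g : 𝕀 → 𝕀) : 𝕀 → 𝕀 := fun y => sInf {x | y ≤ g x}

/-- `f* := (f^ρ)^∨`. -/
def starF (f : 𝕀 → 𝕀) : 𝕀 → 𝕀 := jCl (radj f)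

/-- `f ⊗ g := g ∘ f`. -/
def otimes (f g : 𝕀 → 𝕀) : 𝕀 → 𝕀 := g ∘ f

/-- `f ⊕ g := (g^∧ ∘ f^∧)^∨`. -/
def oplus (f g : 𝕀 → 𝕀) : 𝕀 → 𝕀 := jCl (mCl g ∘ mCl f)

/-- A tuple is closed if `f_{i,j} ⊗ f_{j,k} ≤ f_{i,k}` for `i < j < k`. -/
def ClosedT (d : ℕ) (f : Fin d → Fin d → (𝕀 → 𝕀)) : Prop :=
  ∀ i j k : Fin d, i < j → j < k → ∀ x, otimes (f i j) (f j k) x ≤ f i k x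

/-- A tuple is open if `f_{i,k} ≤ f_{i,j} ⊕ f_{j,k}` for `i < j < k`. -/
def OpenT (d : ℕ) (f : Fin d → Fin d → (𝕀 → 𝕀)) : Prop :=
  ∀ i j k : Fin d, i < j → j < k → ∀ x, f i k x ≤ oplus (f i j) (f j k) x

/-- Pointwise order on the meaningful (`i < j`) entries of tuples. -/
def TLE (d : ℕ) (f g : Fin d → Fin d → (𝕀 → 𝕀)) : Prop :=
  ∀ i j : Fin d, i < j → ∀ x, f i j x ≤ g i j x

/-- Each meaningful entry of the tuple is join-continuous. -/
def TupleJC (d : ℕ) (f : Fin d → Fin d → (𝕀 → 𝕀)) : Prop :=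
  ∀ i j : Fin d, i < j → JoinCont (f i j)

/-- `⊕`-value of a subdivision `ℓ₀ < ℓ₁ < … < ℓ_k`:
`f_{ℓ₀,ℓ₁} ⊕ f_{ℓ₁,ℓ₂} ⊕ … ⊕ f_{ℓ_{k-1},ℓ_k}`. -/
def oplusChain {d : ℕ} (f : Fin d → Fin d → (𝕀 → 𝕀)) : List (Fin d) → (𝕀 → 𝕀)
  | [] => id
  | [_] => id
  | a :: b :: l => oplus (f a b) (oplusChain f (b :: l))

/-- Subdivisions of the interval `[i,j]`: strictly increasing lists from `i` to `j`. -/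
def Subdiv (d : ℕ) (i j : Fin d) : Set (List (Fin d)) :=
  {L | L.Chain' (· < ·) ∧ L.head? = some i ∧ L.getLast? = some j}

/-- The interior of a tuple: `interior(f)_{i,j}` is the infimum, over all subdivisions
`i = ℓ₀ < ℓ₁ < … < ℓ_k = j`, of `f_{ℓ₀,ℓ₁} ⊕ … ⊕ f_{ℓ_{k-1},ℓ_k}`. -/
def interiorT (d : ℕ) (f : Fin d → Fin d → (𝕀 → 𝕀)) : Fin d → Fin d → (𝕀 → 𝕀) :=
  fun i j => ⨅ L : Subdiv d i j, oplusChain f L.1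

/-- The chain `C_f ⊆ 𝕀²` associated to a monotone `f : 𝕀 → 𝕀`. -/
def Cf2 (f : 𝕀 → 𝕀) : Set (𝕀 × 𝕀) :=
  {p | jCl f p.1 ≤ p.2 ∧ p.2 ≤ mCl f p.1}

/-- `f_C^-(x) = ⨅ {y | (x,y) ∈ C}`. -/
def fCm (C : Set (𝕀 × 𝕀)) : 𝕀 → 𝕀 := fun x => sInf {y | (x, y) ∈ C}

/-- `f_C^+(x) = ⨆ {y | (x,y) ∈ C}`. -/
def fCp (C : Set (𝕀 × 𝕀)) : 𝕀 → 𝕀 := fun x => sSup {y | (x, y) ∈ C}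

/-- Compatibility of a (fully extended) tuple: `f_{j,k} ∘ f_{i,j} ≤ f_{i,k}` for all `i,j,k`. -/
def Compatible (d : ℕ) (f : Fin d → Fin d → (𝕀 → 𝕀)) : Prop :=
  ∀ i j k : Fin d, ∀ x, f j k (f i j x) ≤ f i k x

/-- The subset `C_f ⊆ 𝕀^d` associated to a compatible tuple. -/
def Cfd (d : ℕ) (f : Fin d → Fin d → (𝕀 → 𝕀)) : Set (Fin d → 𝕀) :=
  {x | ∀ i j : Fin d, f i j (x i) ≤ x j}

/-- `v(C)_{i,j}(x) = ⨅ {c_j | c ∈ C, c_i = x}`. -/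
def vC (d : ℕ) (C : Set (Fin d → 𝕀)) (i j : Fin d) : 𝕀 → 𝕀 :=
  fun x => sInf {z | ∃ c ∈ C, c i = x ∧ c j = z}

/-- Canonical extension of a tuple given on `i < j` to all pairs:
identity on the diagonal and `f_{j,i} := (f_{i,j})*` below it. -/
def extT (d : ℕ) (g : Fin d → Fin d → (𝕀 → 𝕀)) : Fin d → Fin d → (𝕀 → 𝕀) :=
  fun i j => if i < j then g i j else if j < i then starF (g j i) else id

/-- The one-step function `h_{x,y}`. -/
def oneStep (x y : 𝕀) : 𝕀 → 𝕀 := fun t => if t ≤ x then 0 else y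


namespace S15

lemma mono_of_jc {f : 𝕀 → 𝕀} (hf : JoinCont f) : Monotone f := by
  intro a b hab
  have h := hf {a, b}
  rw [sSup_pair, sup_eq_right.2 hab, iSup_pair] at h
  rw [h]; exact le_sup_left

lemma jCl_le {f : 𝕀 → 𝕀} (hm : Monotone f) (x : 𝕀) : jCl f x ≤ f x :=
  iSup_le fun y => hm (le_of_lt (Subtype.coe_lt_coe.mp y.2))

lemma le_mCl {f : 𝕀 → 𝕀} (hm : Monotone f) (x : 𝕀) : f x ≤ mCl f x :=
  le_iInf fun y => hm (le_of_lt y.2)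

lemma sSup_Iio_eq (x : 𝕀) : sSup (Set.Iio x) = x := by
  refine le_antisymm (sSup_le fun t ht => le_of_lt ht) ?_
  by_contra h
  obtain ⟨t, h1, h2⟩ := exists_between (lt_of_not_ge h)
  exact absurd (le_sSup (show t ∈ Set.Iio x from h2)) (not_le.2 h1)

lemma jCl_apply {f : 𝕀 → 𝕀} (hf : JoinCont f) (x : 𝕀) : jCl f x = f x := by
  have h1 : f (sSup (Set.Iio x)) = ⨆ y ∈ Set.Iio x, f y := hf _
  rw [sSup_Iio_eq] at h1
  rw [h1]
  refine le_antisymm (iSup_le fun y => ?_) (iSup₂_le fun y hy => ?_)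
  · exact le_iSup₂ (f := fun y (_ : y ∈ Set.Iio x) => f y) y.1 (Subtype.coe_lt_coe.mp y.2)
  · exact le_iSup (fun z : {y : 𝕀 // (y:ℝ) < x} => f z.1) ⟨y, Subtype.coe_lt_coe.mpr hy⟩

lemma cf2_le {f : 𝕀 → 𝕀} {p q : 𝕀 × 𝕀} (hp : p ∈ Cf2 f) (hq : q ∈ Cf2 f)
    (h : p.1 < q.1) : p ≤ q := by
  obtain ⟨t, ht1, ht2⟩ := exists_between h
  have h1 : p.2 ≤ f t := le_trans hp.2 (iInf_le (fun z : {y : 𝕀 // p.1 < y} => f z.1) ⟨t, ht1⟩)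
  have h2 : f t ≤ q.2 :=
    le_trans (le_iSup (fun z : {y : 𝕀 // (y:ℝ) < q.1} => f z.1) ⟨t, Subtype.coe_lt_coe.mpr ht2⟩) hq.1
  exact ⟨le_of_lt h, le_trans h1 h2⟩

lemma cf2_chain (f : 𝕀 → 𝕀) : IsChain (· ≤ ·) (Cf2 f) := by
  intro p hp q hq _
  rcases lt_trichotomy p.1 q.1 with h | h | h
  · exact Or.inl (cf2_le hp hq h)
  · rcases le_total p.2 q.2 with h2 | h2
    · exact Or.inl ⟨le_of_eq h, h2⟩
    · exact Or.inr ⟨le_of_eq h.symm, h2⟩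
  · exact Or.inr (cf2_le hq hp h)

lemma cf2_max {f : 𝕀 → 𝕀} (hf : JoinCont f) : IsMaxChain (· ≤ ·) (Cf2 f) := by
  have hm := mono_of_jc hf
  refine ⟨cf2_chain f, fun t ht hsub => (Set.Subset.antisymm hsub fun p hp => ?_)⟩
  constructor
  · rw [jCl_apply hf]
    by_contra h1
    have h1' : ¬ ∀ z : {y : 𝕀 // (y:ℝ) < p.1}, f z.1 ≤ p.2 := by
      intro h; exact h1 (by rw [← jCl_apply hf]; exact iSup_le h)
    push_neg at h1'
    obtain ⟨z, hz⟩ := h1'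
    have hqC : (z.1, f z.1) ∈ Cf2 f := ⟨jCl_le hm z.1, le_mCl hm z.1⟩
    have hne : (z.1, f z.1) ≠ p := fun he => (ne_of_lt hz) (congrArg Prod.snd he).symm
    rcases ht (hsub hqC) hp hne with h | h
    · exact absurd h.2 (not_le.2 hz)
    · exact absurd (lt_of_le_of_lt (Subtype.coe_le_coe.mpr h.1) z.2) (lt_irrefl _)
  · by_contra h2
    have h2' : ¬ ∀ z : {y : 𝕀 // p.1 < y}, p.2 ≤ f z.1 := by
      intro h; exact h2 (le_iInf h)
    push_neg at h2'
    obtain ⟨z, hz⟩ := h2'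
    have hqC : (z.1, f z.1) ∈ Cf2 f := ⟨jCl_le hm z.1, le_mCl hm z.1⟩
    have hne : (z.1, f z.1) ≠ p := fun he => (ne_of_lt hz) (congrArg Prod.snd he)
    rcases ht (hsub hqC) hp hne with h | h
    · exact absurd (lt_of_lt_of_le z.2 h.1) (lt_irrefl _)
    · exact absurd h.2 (not_le.2 hz)

lemma fCm_cf2 {f : 𝕀 → 𝕀} (hf : JoinCont f) : fCm (Cf2 f) = f := by
  have hm := mono_of_jc hf
  funext x
  refine le_antisymm (sInf_le ?_) (le_sInf fun y hy => ?_)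
  · exact ⟨jCl_le hm x, le_mCl hm x⟩
  · have := hy.1
    rwa [jCl_apply hf] at this

section Converse
variable {C : Set (𝕀 × 𝕀)} (hC : IsMaxChain (· ≤ ·) C)
include hC

lemma mem_of_comp (p : 𝕀 × 𝕀) (h : ∀ q ∈ C, p ≤ q ∨ q ≤ p) : p ∈ C := by
  have hins : IsChain (· ≤ ·) (insert p C) := hC.1.insert (fun b hb _ => h b hb)
  have := hC.2 hins (Set.subset_insert p C)
  rw [this]; exact Set.mem_insert p C

lemma exists_mem (x : 𝕀) : ∃ y, (x, y) ∈ C := by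
  set Y := Prod.snd '' {p ∈ C | p.1 ≤ x} with hY
  refine ⟨sSup Y, mem_of_comp hC (x, sSup Y) fun q hq => ?_⟩
  rcases le_or_gt q.1 x with h | h
  · exact Or.inr ⟨h, le_sSup ⟨q, ⟨hq, h⟩, rfl⟩⟩
  · refine Or.inl ⟨le_of_lt h, sSup_le ?_⟩
    rintro z ⟨p, ⟨hpC, hpx⟩, rfl⟩
    by_cases he : p = q
    · exact le_of_eq (congrArg Prod.snd he)
    rcases hC.1 hpC hq he with hle | hle
    · exact hle.2
    · exact absurd (lt_of_lt_of_le h hle.1) (not_lt.2 hpx)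

lemma mem_fCm (x : 𝕀) : (x, fCm C x) ∈ C := by
  obtain ⟨y₀, hy₀⟩ := exists_mem hC x
  refine mem_of_comp hC _ fun q hq => ?_
  rcases lt_trichotomy q.1 x with h | h | h
  · refine Or.inr ⟨le_of_lt h, le_sInf fun y hy => ?_⟩
    have hne : q ≠ (x, y) := fun he => absurd (congrArg Prod.fst he) (ne_of_lt h)
    rcases hC.1 hq hy hne with hle | hle
    · exact hle.2
    · exact absurd (lt_of_le_of_lt hle.1 h) (lt_irrefl _)
  · refine Or.inl ⟨le_of_eq h.symm, sInf_le ?_⟩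
    have : (x, q.2) = q := Prod.ext h.symm rfl
    rw [Set.mem_setOf_eq, this]; exact hq
  · refine Or.inl ⟨le_of_lt h, le_trans (sInf_le hy₀) ?_⟩
    have hne : ((x, y₀) : 𝕀 × 𝕀) ≠ q := fun he => absurd (congrArg Prod.fst he) (ne_of_lt h)
    rcases hC.1 hy₀ hq hne with hle | hle
    · exact hle.2
    · exact absurd (lt_of_lt_of_le h hle.1) (lt_irrefl _)

lemma mono_fCm : Monotone (fCm C) := by
  intro a b hab
  rcases eq_or_lt_of_le hab with rfl | h
  · exact le_rfl
  · have ha := mem_fCm hC a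
    have hb := mem_fCm hC b
    have hne : ((a, fCm C a) : 𝕀 × 𝕀) ≠ (b, fCm C b) :=
      fun he => absurd (congrArg Prod.fst he) (ne_of_lt h)
    rcases hC.1 ha hb hne with hle | hle
    · exact hle.2
    · exact absurd (lt_of_lt_of_le h hle.1) (lt_irrefl _)

lemma jc_fCm : JoinCont (fCm C) := by
  intro S
  refine le_antisymm ?_ (iSup₂_le fun x hx => mono_fCm hC (le_sSup hx))
  have hmem : ((sSup S, ⨆ x ∈ S, fCm C x) : 𝕀 × 𝕀) ∈ C := by
    refine mem_of_comp hC _ fun q hq => ?_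
    by_cases h : ∀ x ∈ S, ((x, fCm C x) : 𝕀 × 𝕀) ≤ q
    · exact Or.inl ⟨sSup_le fun x hx => (h x hx).1, iSup₂_le fun x hx => (h x hx).2⟩
    · push_neg at h
      obtain ⟨x, hx, hxq⟩ := h
      have hne : q ≠ ((x, fCm C x) : 𝕀 × 𝕀) := fun he => hxq (le_of_eq he.symm)
      rcases hC.1 hq (mem_fCm hC x) hne with hle | hle
      · exact Or.inr ⟨le_trans hle.1 (le_sSup hx),
          le_trans hle.2 (le_iSup₂ (f := fun x (_ : x ∈ S) => fCm C x) x hx)⟩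
      · exact absurd hle hxq
  exact sInf_le hmem

lemma C_sub : C ⊆ Cf2 (fCm C) := by
  rintro ⟨x, y⟩ hp
  constructor
  · refine iSup_le fun z => ?_
    have hz : z.1 < x := Subtype.coe_lt_coe.mp z.2
    have hne : ((z.1, fCm C z.1) : 𝕀 × 𝕀) ≠ (x, y) :=
      fun he => absurd (congrArg Prod.fst he) (ne_of_lt hz)
    rcases hC.1 (mem_fCm hC z.1) hp hne with hle | hle
    · exact hle.2
    · exact absurd (lt_of_lt_of_le hz hle.1) (lt_irrefl _)
  · refine le_iInf fun z => ?_
    have hz : x < z.1 := z.2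
    have hne : ((x, y) : 𝕀 × 𝕀) ≠ (z.1, fCm C z.1) :=
      fun he => absurd (congrArg Prod.fst he) (ne_of_lt hz)
    rcases hC.1 hp (mem_fCm hC z.1) hne with hle | hle
    · exact hle.2
    · exact absurd (lt_of_lt_of_le hz hle.1) (lt_irrefl _)

end Converse
end S15

/-- `f ↦ C_f` is a bijection from `ℒ∨(𝕀)` onto the set of maximal
chains of `𝕀²`, with inverse `C ↦ f_C^-`. -/
theorem statement15 :
    (∀ f : 𝕀 → 𝕀, JoinCont f → IsMaxChain (· ≤ ·) (Cf2 f) ∧ fCm (Cf2 f) = f) ∧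
    (∀ C : Set (𝕀 × 𝕀), IsMaxChain (· ≤ ·) C → JoinCont (fCm C) ∧ Cf2 (fCm C) = C) := by
  constructor
  · intro f hf; exact ⟨S15.cf2_max hf, S15.fCm_cf2 hf⟩
  · intro C hC
    exact ⟨S15.jc_fCm hC, (hC.2 (S15.cf2_chain (fCm C)) (S15.C_sub hC)).symm⟩

end
end

section
/- Let d ≥ 2 and let f = (f_{i,j})_{(i,j)∈couples(d)} be a tuple of elements of ℒ∨(𝕀), extended to all pairs by f_{i,i} := id and f_{j,i} := (f_{i,j})* for i < j. Then f is compatible (i.e. f_{j,k} ∘ f_{i,j} ≤ f_{i,k} pointwise for all i, j, k ∈ {1,…,d}) if and only if f is clopen (i.e. f_{i,j} ⊗ f_{j,k} ≤ f_{i,k} and f_{i,k} ≤ f_{i,j} ⊕ f_{j,k} for all 1 ≤ i < j < k ≤ d). -/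
noncomputable section

/-! Auxiliary development for statement16. -/

namespace St16

/-- `star' f y = sup {x | f x < y}`; a convenient description of `starF`. -/
noncomputable def star' (f : 𝕀 → 𝕀) : 𝕀 → 𝕀 := fun y => sSup {x | f x < y}

lemma lt_sSup' {S : Set 𝕀} {a : 𝕀} (h : a < sSup S) : ∃ b ∈ S, a < b := by
  by_contra hc
  push_neg at hc
  exact absurd (sSup_le hc) (not_le.mpr h)

lemma sSup_Iio_eq (x : 𝕀) : sSup (Set.Iio x) = x := by
  refine le_antisymm (sSup_le fun y hy => le_of_lt hy) ?_
  by_contra hc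
  push_neg at hc
  obtain ⟨z, hz1, hz2⟩ := exists_between hc
  exact absurd (le_sSup (show z ∈ Set.Iio x from hz2)) (not_le.mpr hz1)

lemma jc_mono {f : 𝕀 → 𝕀} (hf : JoinCont f) : Monotone f := by
  intro x y hxy
  have h := hf {x, y}
  have hs : sSup {x, y} = y := by
    rw [sSup_pair]; exact sup_eq_right.mpr hxy
  rw [hs] at h
  rw [h]
  exact le_biSup f (Set.mem_insert x {y})

lemma lt_jc {f : 𝕀 → 𝕀} (hf : JoinCont f) {x y : 𝕀} (h : y < f x) :
    ∃ x', x' < x ∧ y < f x' := by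
  have h2 := hf (Set.Iio x)
  rw [sSup_Iio_eq] at h2
  rw [h2, ← sSup_image] at h
  obtain ⟨b, ⟨x', hx', rfl⟩, hb⟩ := lt_sSup' h
  exact ⟨x', hx', hb⟩

lemma jc_comp {f g : 𝕀 → 𝕀} (hf : JoinCont f) (hg : JoinCont g) :
    JoinCont (fun x => g (f x)) := by
  intro S
  show g (f (sSup S)) = _
  rw [hf S, ← sSup_image, hg, iSup_image]

lemma le_star' {f : 𝕀 → 𝕀} {x y : 𝕀} (h : f x < y) : x ≤ star' f y := le_sSup h

lemma star'_le_of {f : 𝕀 → 𝕀} (hf : Monotone f) {x y : 𝕀} (h : y ≤ f x) :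
    star' f y ≤ x := by
  refine sSup_le fun x' hx' => ?_
  by_contra hc
  push_neg at hc
  exact absurd (hf hc.le) (not_le.mpr (lt_of_lt_of_le hx' h))

lemma star'_mono (f : 𝕀 → 𝕀) : Monotone (star' f) := fun y z hyz =>
  sSup_le_sSup fun x hx => lt_of_lt_of_le hx hyz

lemma star'_anti {f g : 𝕀 → 𝕀} (h : ∀ x, f x ≤ g x) (y : 𝕀) :
    star' g y ≤ star' f y :=
  sSup_le_sSup fun x hx => lt_of_le_of_lt (h x) hx

lemma star'_jc (f : 𝕀 → 𝕀) : JoinCont (star' f) := by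
  intro S
  apply le_antisymm
  · refine sSup_le fun x hx => ?_
    obtain ⟨s, hs, hxs⟩ := lt_sSup' hx
    exact le_trans (le_star' hxs) (le_biSup _ hs)
  · exact iSup_le fun s => iSup_le fun hs => star'_mono f (le_sSup hs)

lemma star'_comp_self {f : 𝕀 → 𝕀} (hf : Monotone f) (x : 𝕀) : star' f (f x) ≤ x :=
  star'_le_of hf le_rfl

lemma self_comp_star' {f : 𝕀 → 𝕀} (hf : JoinCont f) (y : 𝕀) : f (star' f y) ≤ y := by
  unfold star'
  rw [hf]
  exact iSup_le fun x => iSup_le fun hx => le_of_lt hx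

lemma star'_star' {f : 𝕀 → 𝕀} (hf : JoinCont f) (x : 𝕀) :
    star' (star' f) x = f x := by
  apply le_antisymm
  · refine sSup_le fun y hy => ?_
    by_contra hc
    push_neg at hc
    exact absurd (le_star' hc) (not_le.mpr hy)
  · refine le_trans (sSup_Iio_eq (f x)).ge (sSup_le fun y hy => ?_)
    obtain ⟨x', hx', hy'⟩ := lt_jc hf hy
    refine le_sSup ?_
    show star' f y < x
    exact lt_of_le_of_lt
      (le_trans (star'_mono f hy'.le) (star'_comp_self (jc_mono hf) x')) hx'

lemma rot {F G H : 𝕀 → 𝕀} (hG : Monotone G) (h : ∀ x, G (F x) ≤ H x) (y : 𝕀) :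
    star' H (G y) ≤ star' F y := by
  refine sSup_le fun x hx => ?_
  refine le_star' ?_
  by_contra hc
  push_neg at hc
  exact absurd (le_trans (hG hc) (h x)) (not_le.mpr hx)

lemma starF_eq (f : 𝕀 → 𝕀) : starF f = star' f := by
  funext y
  apply le_antisymm
  · show (⨆ z : {z : 𝕀 // z.1 < y}, radj f z.1) ≤ sSup {x | f x < y}
    refine iSup_le fun z => sSup_le fun x hx => ?_
    exact le_sSup (show x ∈ {x' : 𝕀 | f x' < y} from lt_of_le_of_lt hx z.2)
  · show sSup {x | f x < y} ≤ ⨆ z : {z : 𝕀 // z.1 < y}, radj f z.1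
    refine sSup_le fun x hx => ?_
    have h1 : radj f (f x) ≤ ⨆ z : {z : 𝕀 // z.1 < y}, radj f z.1 :=
      le_iSup (fun z : {z : 𝕀 // z.1 < y} => radj f z.1) ⟨f x, hx⟩
    exact le_trans (le_sSup (show x ∈ {x' : 𝕀 | f x' ≤ f x} by exact le_refl (f x))) h1

lemma mCl_galois (a : 𝕀 → 𝕀) (x y : 𝕀) : y ≤ mCl a x ↔ star' a y ≤ x := by
  constructor
  · intro h
    refine sSup_le fun u hu => ?_
    by_contra hc
    push_neg at hc
    have h2 : y ≤ a u := le_trans h (iInf_le (fun z : {z : 𝕀 // x < z} => a z.1) ⟨u, hc⟩)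
    exact absurd h2 (not_le.mpr hu)
  · intro h
    refine le_iInf fun u => ?_
    by_contra hc
    push_neg at hc
    have h2 : u.1 ≤ x := le_trans (le_sSup (show u.1 ∈ {u' : 𝕀 | a u' < y} from hc)) h
    exact absurd h2 (not_le.mpr u.2)

lemma oplus_eq (a b : 𝕀 → 𝕀) (x : 𝕀) :
    oplus a b x = star' (fun y => star' a (star' b y)) x := by
  have gal : ∀ x' y : 𝕀, y ≤ mCl b (mCl a x') ↔ star' a (star' b y) ≤ x' := by
    intro x' y
    rw [mCl_galois, mCl_galois]
  show jCl (mCl b ∘ mCl a) x = _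
  unfold jCl
  apply le_antisymm
  · refine iSup_le fun z => le_sSup ?_
    show star' a (star' b ((mCl b ∘ mCl a) z.1)) < x
    exact lt_of_le_of_lt ((gal z.1 _).mp le_rfl) z.2
  · refine sSup_le fun y hy => ?_
    exact le_trans ((gal _ y).mpr le_rfl)
      (le_iSup (fun z : {z : 𝕀 // z.1 < x} => (mCl b ∘ mCl a) z.1)
        ⟨star' a (star' b y), hy⟩)

lemma open_iff {a b c : 𝕀 → 𝕀} (ha : JoinCont a) (hb : JoinCont b) (hc : JoinCont c) :
    (∀ x, c x ≤ oplus a b x) ↔ (∀ x, star' b (c x) ≤ a x) := by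
  constructor
  · intro h
    have hg : JoinCont (fun y => star' a (star' b y)) := jc_comp (star'_jc b) (star'_jc a)
    have h1 : ∀ y, star' a (star' b y) ≤ star' c y := by
      intro y
      calc star' a (star' b y)
          = star' (star' (fun y => star' a (star' b y))) y := (star'_star' hg y).symm
        _ ≤ star' c y := star'_anti (fun x => by rw [← oplus_eq]; exact h x) y
    have h2 : ∀ y, c (star' a y) ≤ b y := by
      intro y
      have h3 := rot (star'_mono a) h1 y
      rwa [star'_star' hc, star'_star' hb] at h3
    intro x
    have h4 := rot (jc_mono hc) h2 x
    rwa [star'_star' ha] at h4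
  · intro h x
    rw [oplus_eq]
    refine le_trans (sSup_Iio_eq (c x)).ge (sSup_le fun y hy => ?_)
    obtain ⟨x', hx', hy'⟩ := lt_jc hc hy
    refine le_sSup ?_
    show star' a (star' b y) < x
    calc star' a (star' b y)
        ≤ star' a (a x') := star'_mono a (le_trans (star'_mono b hy'.le) (h x'))
      _ ≤ x' := star'_comp_self (jc_mono ha) x'
      _ < x := hx'

end St16


/-- a tuple of elements of `ℒ∨(𝕀)`, extended by `f_{i,i} = id` and
`f_{j,i} = (f_{i,j})*`, is compatible iff it is clopen. -/
theorem statement16 (d : ℕ) (hd : 2 ≤ d) (f : Fin d → Fin d → (𝕀 → 𝕀))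
    (hjc : TupleJC d f)
    (hdiag : ∀ i : Fin d, f i i = id)
    (hskew : ∀ i j : Fin d, i < j → f j i = starF (f i j)) :
    Compatible d f ↔ (ClosedT d f ∧ OpenT d f) := by
  constructor
  · intro hcomp
    refine ⟨fun i j k hij hjk x => hcomp i j k x, fun i j k hij hjk x => ?_⟩
    have ha := hjc i j hij
    have hb := hjc j k hjk
    have hc := hjc i k (hij.trans hjk)
    have h2 : ∀ x, St16.star' (f j k) (f i k x) ≤ f i j x := by
      intro x'
      have h3 := hcomp i k j x'
      rwa [hskew j k hjk, St16.starF_eq] at h3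
    exact (St16.open_iff ha hb hc).mpr h2 x
  · rintro ⟨hC, hO⟩ p q r x
    have six : ∀ i j k : Fin d, i < j → j < k →
        (∀ x, f j k (f i j x) ≤ f i k x) ∧
        (∀ x, St16.star' (f j k) (f i k x) ≤ f i j x) ∧
        (∀ x, f i k (St16.star' (f i j) x) ≤ f j k x) ∧
        (∀ x, St16.star' (f i k) (f j k x) ≤ St16.star' (f i j) x) ∧
        (∀ x, f i j (St16.star' (f i k) x) ≤ St16.star' (f j k) x) ∧
        (∀ x, St16.star' (f i j) (St16.star' (f j k) x) ≤ St16.star' (f i k) x) := by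
      intro i j k hij hjk
      have ha := hjc i j hij
      have hb := hjc j k hjk
      have hc := hjc i k (hij.trans hjk)
      have h1 : ∀ x, f j k (f i j x) ≤ f i k x := fun x => hC i j k hij hjk x
      have h2 : ∀ x, St16.star' (f j k) (f i k x) ≤ f i j x :=
        (St16.open_iff ha hb hc).mp (fun x => hO i j k hij hjk x)
      have h4 : ∀ x, St16.star' (f i k) (f j k x) ≤ St16.star' (f i j) x :=
        St16.rot (St16.jc_mono hb) h1
      have h5 : ∀ x, f i j (St16.star' (f i k) x) ≤ St16.star' (f j k) x := by
        intro x
        have h0 := St16.rot (St16.star'_mono (f i k)) h4 x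
        rwa [St16.star'_star' ha] at h0
      have h6 : ∀ x, St16.star' (f i j) (St16.star' (f j k) x) ≤ St16.star' (f i k) x :=
        fun x => St16.rot (St16.star'_mono (f j k)) h2 x
      have h3 : ∀ x, f i k (St16.star' (f i j) x) ≤ f j k x := by
        intro x
        have h0 := St16.rot (St16.star'_mono (f i j)) h6 x
        rwa [St16.star'_star' hb, St16.star'_star' hc] at h0
      exact ⟨h1, h2, h3, h4, h5, h6⟩
    rcases eq_or_ne p q with h | hpq
    · subst h
      rw [hdiag p]
      exact le_rfl
    rcases eq_or_ne q r with h | hqr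
    · subst h
      rw [hdiag q]
      exact le_rfl
    rcases eq_or_ne p r with h | hpr
    · subst h
      rw [hdiag p]
      rcases lt_or_gt_of_ne hpq with h1 | h1
      · rw [hskew p q h1, St16.starF_eq]
        exact St16.star'_comp_self (St16.jc_mono (hjc p q h1)) x
      · rw [hskew q p h1, St16.starF_eq]
        exact St16.self_comp_star' (hjc q p h1) x
    rcases lt_or_gt_of_ne hpq with h1 | h1 <;>
      rcases lt_or_gt_of_ne hqr with h2 | h2 <;>
      rcases lt_or_gt_of_ne hpr with h3 | h3
    · exact (six p q r h1 h2).1 x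
    · exact absurd (h1.trans h2) (asymm h3)
    · rw [hskew r q h2, St16.starF_eq]
      exact (six p r q h3 h2).2.1 x
    · rw [hskew r q h2, hskew r p h3]
      simp only [St16.starF_eq]
      exact (six r p q h3 h1).2.2.2.1 x
    · rw [hskew q p h1, St16.starF_eq]
      exact (six q p r h1 h3).2.2.1 x
    · rw [hskew q p h1, hskew r p h3]
      simp only [St16.starF_eq]
      exact (six q r p h2 h3).2.2.2.2.1 x
    · exact absurd (h2.trans h1) (asymm h3)
    · rw [hskew q p h1, hskew r q h2, hskew r p h3]
      simp only [St16.starF_eq]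
      exact (six r q p h2 h1).2.2.2.2.2 x

end
end

section
/- Let d ≥ 2 and let f be a compatible tuple, i.e. a family (f_{i,j})_{i,j∈{1,…,d}} with each f_{i,j} ∈ ℒ∨(𝕀), f_{i,i} = id, f_{j,i} = (f_{i,j})* for i < j, and f_{j,k} ∘ f_{i,j} ≤ f_{i,k} for all i, j, k. Then C_f := {x ∈ 𝕀^d | f_{i,j}(x_i) ≤ x_j for all i, j ∈ {1,…,d}} is a maximal chain of 𝕀^d. -/
noncomputable section

/-- Mix lemma: `starF g u < v` and `g v < u` are contradictory. -/
lemma mix_lemma (g : 𝕀 → 𝕀) (u v : 𝕀) (h1 : starF g u < v) (h2 : g v < u) : False := by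
  have hv : v ≤ radj g (g v) := le_sSup (by simp [Set.mem_setOf_eq])
  have h3 : radj g (g v) ≤ starF g u :=
    le_iSup (fun y : {y : 𝕀 // y.1 < u} => radj g y.1) ⟨g v, h2⟩
  exact absurd (hv.trans h3) (not_le.mpr h1)

lemma joinCont_id : JoinCont (id : 𝕀 → 𝕀) := by
  intro S
  simpa using sSup_eq_iSup (s := S)

lemma joinCont_jCl (g : 𝕀 → 𝕀) : JoinCont (jCl g) := by
  intro S
  apply le_antisymm
  · apply iSup_le
    rintro ⟨y, hy⟩
    have hex : ∃ x ∈ S, y < x := by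
      by_contra h
      push_neg at h
      exact absurd (sSup_le h) (not_le.mpr hy)
    obtain ⟨x, hxS, hyx⟩ := hex
    have h1 : g y ≤ jCl g x :=
      le_iSup (fun z : {z : 𝕀 // z.1 < x} => g z.1) ⟨y, hyx⟩
    exact h1.trans (le_biSup _ hxS)
  · apply iSup_le; intro x; apply iSup_le; intro hx
    apply iSup_le
    rintro ⟨y, hy⟩
    exact le_iSup (fun z : {z : 𝕀 // z.1 < sSup S} => g z.1) ⟨y, lt_of_lt_of_le hy (le_sSup hx)⟩

/-- In `𝕀`, every element is the sup of the elements strictly below it. -/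
lemma sSup_Iio_eq (x : 𝕀) : sSup (Set.Iio x) = x := by
  apply le_antisymm (sSup_le fun t ht => ht.le)
  by_contra h
  push_neg at h
  set s := sSup (Set.Iio x) with hs
  have hsx : s < x := h
  have hsx' : (s : ℝ) < (x : ℝ) := hsx
  have hm0 : (0:ℝ) ≤ ((s : ℝ) + (x : ℝ)) / 2 := by
    have := s.2.1; have := x.2.1; dsimp [unitInterval] at *; linarith
  have hm1 : ((s : ℝ) + (x : ℝ)) / 2 ≤ 1 := by
    have := s.2.2; have := x.2.2; dsimp [unitInterval] at *; linarith
  set m : 𝕀 := ⟨((s : ℝ) + (x : ℝ)) / 2, hm0, hm1⟩ with hmdef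
  have hsm : s < m := by
    rw [← Subtype.coe_lt_coe]; dsimp [m]; linarith
  have hmx : m < x := by
    rw [← Subtype.coe_lt_coe]; dsimp [m]; linarith
  exact absurd (le_sSup (show m ∈ Set.Iio x from hmx)) (not_le.mpr hsm)

/-- Left-continuity consequence of join-continuity. -/
lemma joinCont_le_of_lt (g : 𝕀 → 𝕀) (hg : JoinCont g) (x b : 𝕀)
    (h : ∀ t, t < x → g t ≤ b) : g x ≤ b := by
  have : g x = ⨆ t ∈ Set.Iio x, g t := by
    conv_lhs => rw [← sSup_Iio_eq x]
    exact hg (Set.Iio x)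
  rw [this]
  exact iSup₂_le fun t ht => h t ht

/-- for a compatible tuple `f`, the set
`C_f = {x ∈ 𝕀^d | f_{i,j}(x_i) ≤ x_j for all i,j}` is a maximal chain of `𝕀^d`. -/
theorem statement17 (d : ℕ) (hd : 2 ≤ d) (f : Fin d → Fin d → (𝕀 → 𝕀))
    (hjc : TupleJC d f)
    (hdiag : ∀ i : Fin d, f i i = id)
    (hskew : ∀ i j : Fin d, i < j → f j i = starF (f i j))
    (hcomp : Compatible d f) :
    IsMaxChain (· ≤ ·) (Cfd d f) := by
  have hallJC : ∀ j k : Fin d, JoinCont (f j k) := by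
    intro j k
    rcases lt_trichotomy j k with h | h | h
    · exact hjc j k h
    · rw [h, hdiag]; exact joinCont_id
    · rw [hskew k j h]; exact joinCont_jCl _
  constructor
  · -- C_f is a chain
    intro x hx y hy hne
    by_contra hcon
    push_neg at hcon
    obtain ⟨hnxy, hnyx⟩ := hcon
    obtain ⟨i, hi⟩ : ∃ i, y i < x i := by
      by_contra h; push_neg at h; exact hnxy (fun k => h k)
    obtain ⟨j, hj⟩ : ∃ j, x j < y j := by
      by_contra h; push_neg at h; exact hnyx (fun k => h k)
    rcases lt_trichotomy i j with hij | hij | hij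
    · -- i < j : f j i = (f i j)*
      have h1 : starF (f i j) (y j) < x i := by
        have := hy j i          -- f j i (y j) ≤ y i
        rw [hskew i j hij] at this
        exact lt_of_le_of_lt this hi
      have h2 : f i j (x i) < y j := lt_of_le_of_lt (hx i j) hj
      exact mix_lemma (f i j) (y j) (x i) h1 h2
    · exact absurd hj (not_lt.mpr (le_of_lt (hij ▸ hi)))
    · -- j < i : f i j = (f j i)*
      have h1 : starF (f j i) (x i) < y j := by
        have := hx i j          -- f i j (x i) ≤ x j
        rw [hskew j i hij] at this
        exact lt_of_le_of_lt this hj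
      have h2 : f j i (y j) < x i := lt_of_le_of_lt (hy j i) hi
      exact mix_lemma (f j i) (x i) (y j) h1 h2
  · -- maximality
    intro t htchain htsub
    refine Set.Subset.antisymm htsub (fun z hz => ?_)
    intro j k
    apply joinCont_le_of_lt (f j k) (hallJC j k)
    intro u hu
    set P : Fin d → 𝕀 := fun a => f j a u with hPdef
    have hPC : P ∈ Cfd d f := fun a b => hcomp j a b u
    have hPt : P ∈ t := htsub hPC
    have hPj : P j = u := by simp [P, hdiag]
    rcases eq_or_ne P z with heq | hne
    · exact absurd hu (by rw [← heq, hPj]; exact lt_irrefl u)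
    · rcases htchain hPt hz hne with hle | hle
      · exact hle k
      · have hzj : z j ≤ u := hPj ▸ hle j
        exact absurd hu (not_lt.mpr hzj)

end
end

section
/- Let d ≥ 2. For a maximal chain C ⊆ 𝕀^d define v(C)_{i,j}(x) := ⨅{c_j | c ∈ C, c_i = x} for (i,j) ∈ couples(d). Then: (1) for every compatible tuple f one has v(C_f) = f (restricted to couples(d)); (2) for every maximal chain C, the tuple v(C) is compatible (after the canonical extension) and C_{v(C)} = C. Hence C ↦ v(C) and f ↦ C_f are mutually inverse bijections between maximal chains of 𝕀^d and compatible tuples. -/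
noncomputable section

namespace Statement18Aux

open Set

variable {d : ℕ} {C : Set (Fin d → 𝕀)}

lemma mem_of_comp (hC : IsMaxChain (· ≤ ·) C) {z : Fin d → 𝕀}
    (h : ∀ c ∈ C, z ≤ c ∨ c ≤ z) : z ∈ C := by
  have hch : IsChain (· ≤ ·) (insert z C) := hC.1.insert (fun b hb _ => h b hb)
  have h2 := hC.2 hch (Set.subset_insert z C)
  rw [h2]; exact Set.mem_insert z C

lemma sSup_mem (hC : IsMaxChain (· ≤ ·) C) {S : Set (Fin d → 𝕀)} (hS : S ⊆ C) :
    sSup S ∈ C := by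
  apply mem_of_comp hC
  intro c hc
  by_cases h : ∀ s ∈ S, s ≤ c
  · exact Or.inl (sSup_le h)
  · push_neg at h
    obtain ⟨s, hs, hsc⟩ := h
    rcases hC.1.total (hS hs) hc with h'|h'
    · exact absurd h' hsc
    · exact Or.inr (h'.trans (le_sSup hs))

lemma sInf_mem (hC : IsMaxChain (· ≤ ·) C) {S : Set (Fin d → 𝕀)} (hS : S ⊆ C) :
    sInf S ∈ C := by
  apply mem_of_comp hC
  intro c hc
  by_cases h : ∀ s ∈ S, c ≤ s
  · exact Or.inr (le_sInf h)
  · push_neg at h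
    obtain ⟨s, hs, hsc⟩ := h
    rcases hC.1.total (hS hs) hc with h'|h'
    · exact Or.inl ((sInf_le hs).trans h')
    · exact absurd h' hsc

/-- minimal element of `C` with `i`-th coordinate `x`. -/
def mC (C : Set (Fin d → 𝕀)) (i : Fin d) (x : 𝕀) : Fin d → 𝕀 := sInf {c ∈ C | c i = x}

/-- maximal element of `C` with `i`-th coordinate `x`. -/
def MC (C : Set (Fin d → 𝕀)) (i : Fin d) (x : 𝕀) : Fin d → 𝕀 := sSup {c ∈ C | c i = x}

lemma surj (hC : IsMaxChain (· ≤ ·) C) (i : Fin d) (x : 𝕀) : ∃ c ∈ C, c i = x := by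
  have haC : sSup {c ∈ C | c i ≤ x} ∈ C := sSup_mem hC (Set.sep_subset _ _)
  have hbC : sInf {c ∈ C | x ≤ c i} ∈ C := sInf_mem hC (Set.sep_subset _ _)
  have hax : sSup {c ∈ C | c i ≤ x} i ≤ x := by
    rw [sSup_apply]; exact iSup_le fun f => f.2.2
  have hxb : x ≤ sInf {c ∈ C | x ≤ c i} i := by
    rw [sInf_apply]; exact le_iInf fun f => f.2.2
  by_cases hba : sInf {c ∈ C | x ≤ c i} ≤ sSup {c ∈ C | c i ≤ x}
  · exact ⟨_, haC, le_antisymm hax (hxb.trans (hba i))⟩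
  · have hab : sSup {c ∈ C | c i ≤ x} ≤ sInf {c ∈ C | x ≤ c i} :=
      (hC.1.total haC hbC).resolve_right hba
    refine ⟨Function.update (sSup {c ∈ C | c i ≤ x}) i x, ?_,
      by rw [Function.update_self]⟩
    apply mem_of_comp hC
    intro c hc
    rcases le_total (c i) x with h|h
    · refine Or.inr (le_trans (le_sSup (show c ∈ {c ∈ C | c i ≤ x} from ⟨hc, h⟩)) ?_)
      intro k
      by_cases hk : k = i
      · subst hk; rw [Function.update_self]; exact hax
      · rw [Function.update_of_ne hk]
    · refine Or.inl (le_trans ?_ (sInf_le (show c ∈ {c ∈ C | x ≤ c i} from ⟨hc, h⟩)))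
      intro k
      by_cases hk : k = i
      · subst hk; rw [Function.update_self]; exact hxb
      · rw [Function.update_of_ne hk]; exact hab k

lemma mC_mem (hC : IsMaxChain (· ≤ ·) C) (i : Fin d) (x : 𝕀) : mC C i x ∈ C :=
  sInf_mem hC (Set.sep_subset _ _)

lemma MC_mem (hC : IsMaxChain (· ≤ ·) C) (i : Fin d) (x : 𝕀) : MC C i x ∈ C :=
  sSup_mem hC (Set.sep_subset _ _)

lemma mC_le {c : Fin d → 𝕀} (hc : c ∈ C) {i : Fin d} {x : 𝕀} (h : c i = x) :
    mC C i x ≤ c := sInf_le ⟨hc, h⟩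

lemma le_MC {c : Fin d → 𝕀} (hc : c ∈ C) {i : Fin d} {x : 𝕀} (h : c i = x) :
    c ≤ MC C i x := le_sSup ⟨hc, h⟩

lemma mC_apply (hC : IsMaxChain (· ≤ ·) C) (i : Fin d) (x : 𝕀) : mC C i x i = x := by
  obtain ⟨c, hc, hci⟩ := surj hC i x
  refine le_antisymm ?_ ?_
  · have h1 := mC_le hc hci i
    rwa [hci] at h1
  · rw [mC, sInf_apply]
    exact le_iInf fun f => f.2.2.ge

lemma MC_apply (hC : IsMaxChain (· ≤ ·) C) (i : Fin d) (x : 𝕀) : MC C i x i = x := by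
  obtain ⟨c, hc, hci⟩ := surj hC i x
  refine le_antisymm ?_ ?_
  · rw [MC, sSup_apply]
    exact iSup_le fun f => f.2.2.le
  · have h1 := le_MC hc hci i
    rwa [hci] at h1

lemma vC_eq (hC : IsMaxChain (· ≤ ·) C) (i j : Fin d) (x : 𝕀) :
    vC d C i j x = mC C i x j := by
  simp only [vC]
  refine le_antisymm (sInf_le ⟨mC C i x, mC_mem hC i x, mC_apply hC i x, rfl⟩)
    (le_sInf ?_)
  rintro z ⟨c, hc, hci, rfl⟩
  exact mC_le hc hci j

lemma mC_mono (hC : IsMaxChain (· ≤ ·) C) {i : Fin d} {x y : 𝕀} (h : x ≤ y) :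
    mC C i x ≤ mC C i y := by
  rcases hC.1.total (mC_mem hC i x) (mC_mem hC i y) with h'|h'
  · exact h'
  · have h2 : y ≤ x := by
      have := h' i; rwa [mC_apply hC, mC_apply hC] at this
    obtain rfl := le_antisymm h h2
    exact le_rfl

lemma MC_lt_le (hC : IsMaxChain (· ≤ ·) C) {j : Fin d} {y' y : 𝕀} (h : y' < y) :
    MC C j y' ≤ mC C j y := by
  rcases hC.1.total (MC_mem hC j y') (mC_mem hC j y) with h'|h'
  · exact h'
  · have h2 : y ≤ y' := by
      have := h' j; rwa [mC_apply hC, MC_apply hC] at this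
    exact absurd h2 (not_le.mpr h)

lemma le_MC_of_le (hC : IsMaxChain (· ≤ ·) C) {c : Fin d → 𝕀} (hc : c ∈ C)
    {j : Fin d} {y : 𝕀} (h : c j ≤ y) : c ≤ MC C j y := by
  rcases hC.1.total hc (MC_mem hC j y) with h'|h'
  · exact h'
  · have h2 : y ≤ c j := by
      have := h' j; rwa [MC_apply hC] at this
    exact le_MC hc (le_antisymm h h2)

lemma iSup_lt_eq (y : 𝕀) : (⨆ p : {z : 𝕀 // z < y}, p.1) = y := by
  refine le_antisymm (iSup_le fun p => p.2.le) ?_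
  by_contra h
  push_neg at h
  obtain ⟨z, h1, h2⟩ := exists_between h
  exact absurd (le_iSup (fun p : {z : 𝕀 // z < y} => p.1) ⟨z, h2⟩) (not_le.mpr h1)

lemma radj_vC (hC : IsMaxChain (· ≤ ·) C) (i j : Fin d) :
    radj (vC d C i j) = fun y => MC C j y i := by
  funext y
  simp only [radj]
  refine le_antisymm (sSup_le ?_) (le_sSup ?_)
  · intro x hx
    simp only [Set.mem_setOf_eq, vC_eq hC] at hx
    have h1 : mC C i x ≤ MC C j y := le_MC_of_le hC (mC_mem hC i x) hx
    have h2 := h1 i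
    rwa [mC_apply hC] at h2
  · simp only [Set.mem_setOf_eq, vC_eq hC]
    have h1 : mC C i (MC C j y i) ≤ MC C j y := mC_le (MC_mem hC j y) rfl
    exact (h1 j).trans (le_of_eq (MC_apply hC j y))

lemma jCl_MC (hC : IsMaxChain (· ≤ ·) C) (i j : Fin d) :
    jCl (fun y => MC C j y i) = fun y => mC C j y i := by
  funext y
  simp only [jCl]
  refine le_antisymm (iSup_le fun p => MC_lt_le hC p.2 i) ?_
  have hvC : (⨆ p : {z : 𝕀 // z < y}, MC C j p.1) ∈ C := by
    rw [← sSup_range]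
    exact sSup_mem hC (by rintro _ ⟨p, rfl⟩; exact MC_mem hC j p.1)
  have hvj : (⨆ p : {z : 𝕀 // z < y}, MC C j p.1) j = y := by
    rw [iSup_apply]
    calc (⨆ p : {z : 𝕀 // z < y}, MC C j p.1 j)
        = ⨆ p : {z : 𝕀 // z < y}, p.1 := iSup_congr fun p => MC_apply hC j p.1
      _ = y := iSup_lt_eq y
  have h1 : mC C j y ≤ ⨆ p : {z : 𝕀 // z < y}, MC C j p.1 := mC_le hvC hvj
  have h2 := h1 i
  rwa [iSup_apply] at h2

lemma starF_vC (hC : IsMaxChain (· ≤ ·) C) (i j : Fin d) :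
    starF (vC d C i j) = vC d C j i := by
  rw [starF, radj_vC hC, jCl_MC hC]
  funext y
  exact (vC_eq hC j i y).symm

lemma vC_diag (hC : IsMaxChain (· ≤ ·) C) (i : Fin d) : vC d C i i = id := by
  funext x
  rw [vC_eq hC, mC_apply hC]
  rfl

lemma extT_vC (hC : IsMaxChain (· ≤ ·) C) (i j : Fin d) :
    extT d (vC d C) i j = vC d C i j := by
  rcases lt_trichotomy i j with h|h|h
  · simp only [extT, if_pos h]
  · subst h
    simp only [extT, lt_irrefl, if_false]
    exact (vC_diag hC i).symm
  · simp only [extT, if_neg (not_lt.mpr h.le), if_pos h]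
    exact starF_vC hC j i

lemma vC_joinCont (hC : IsMaxChain (· ≤ ·) C) (i j : Fin d) :
    JoinCont (vC d C i j) := by
  intro S
  simp only [vC_eq hC]
  refine le_antisymm ?_ ?_
  · have huC : (⨆ x : S, mC C i x.1) ∈ C := by
      rw [← sSup_range]
      exact sSup_mem hC (by rintro _ ⟨p, rfl⟩; exact mC_mem hC i p.1)
    have hui : (⨆ x : S, mC C i x.1) i = sSup S := by
      rw [iSup_apply]
      calc (⨆ x : S, mC C i x.1 i) = ⨆ x : S, x.1 :=
            iSup_congr fun x => mC_apply hC i x.1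
        _ = sSup S := (sSup_eq_iSup' S).symm
    have h1 : mC C i (sSup S) ≤ ⨆ x : S, mC C i x.1 := mC_le huC hui
    refine (h1 j).trans ?_
    rw [iSup_apply]
    exact iSup_le fun x => le_iSup₂ (f := fun x (_ : x ∈ S) => mC C i x j) x.1 x.2
  · exact iSup₂_le fun x hx => (mC_mono hC (le_sSup hx)) j

lemma vC_compat (hC : IsMaxChain (· ≤ ·) C) : Compatible d (extT d (vC d C)) := by
  intro i j k x
  simp only [extT_vC hC, vC_eq hC]
  exact (mC_le (mC_mem hC i x) rfl) k

lemma cfd_vC (hC : IsMaxChain (· ≤ ·) C) : Cfd d (extT d (vC d C)) = C := by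
  ext x
  simp only [Cfd, Set.mem_setOf_eq]
  constructor
  · intro h
    apply mem_of_comp hC
    intro c hc
    by_cases hcx : c ≤ x
    · exact Or.inr hcx
    · left
      obtain ⟨j, hj⟩ : ∃ j, ¬ c j ≤ x j := by
        by_contra hall
        push_neg at hall
        exact hcx fun k => hall k
      have hj' : x j < c j := not_le.mp hj
      intro i
      have h' := h i j
      rw [extT_vC hC, vC_eq hC] at h'
      rcases hC.1.total (mC_mem hC i (x i)) hc with h2|h2
      · have h3 := h2 i
        rwa [mC_apply hC] at h3
      · exact absurd ((h2 j).trans h') (not_le.mpr hj')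
  · intro hx i j
    rw [extT_vC hC, vC_eq hC]
    exact mC_le hx rfl j

lemma part1 {d : ℕ} (f : Fin d → Fin d → (𝕀 → 𝕀)) (hdiag : ∀ i, f i i = id)
    (hcomp : Compatible d f) (i j : Fin d) : vC d (Cfd d f) i j = f i j := by
  funext x
  have hcmem : (fun k => f i k x) ∈ Cfd d f := fun k l => hcomp i k l x
  have hci : (fun k => f i k x) i = x := by show f i i x = x; rw [hdiag i]; rfl
  simp only [vC]
  refine le_antisymm (sInf_le ⟨_, hcmem, hci, rfl⟩) (le_sInf ?_)
  rintro z ⟨c, hc, hci', rfl⟩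
  have h1 := hc i j
  rwa [hci'] at h1

end Statement18Aux

/-- `C ↦ v(C)` and `f ↦ C_f` are mutually inverse bijections between
maximal chains of `𝕀^d` and compatible tuples. -/
theorem statement18 (d : ℕ) (hd : 2 ≤ d) :
    (∀ f : Fin d → Fin d → (𝕀 → 𝕀), TupleJC d f → (∀ i : Fin d, f i i = id) →
      (∀ i j : Fin d, i < j → f j i = starF (f i j)) → Compatible d f →
      ∀ i j : Fin d, i < j → vC d (Cfd d f) i j = f i j) ∧
    (∀ C : Set (Fin d → 𝕀), IsMaxChain (· ≤ ·) C →
      (∀ i j : Fin d, i < j → JoinCont (vC d C i j)) ∧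
      Compatible d (extT d (vC d C)) ∧
      Cfd d (extT d (vC d C)) = C) := by
  constructor
  · intro f _ hdiag _ hcomp i j _
    exact Statement18Aux.part1 f hdiag hcomp i j
  · intro C hC
    exact ⟨fun i j _ => Statement18Aux.vC_joinCont hC i j,
      Statement18Aux.vC_compat hC, Statement18Aux.cfd_vC hC⟩

end
end

section
/- The join-prime elements of the lattice ℒ∨(𝕀) (ordered pointwise) are exactly the prime one-step functions, i.e. the functions h_{x,y} with x, y ∈ 𝕀, x < 1 and 0 < y, where h_{x,y}(t) := 0 for t ≤ x and h_{x,y}(t) := y for x < t. -/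
noncomputable section

private lemma I_zero_le (a : 𝕀) : 0 ≤ a := unitInterval.nonneg'

private lemma mono_of_jc {f : 𝕀 → 𝕀} (hf : JoinCont f) : Monotone f := by
  intro a b hab
  have h := hf {a, b}
  rw [sSup_pair, sup_eq_right.mpr hab] at h
  rw [h]
  exact le_biSup f (by simp)

private lemma exists_not_le {S : Set 𝕀} {c : 𝕀} (h : ¬ sSup S ≤ c) : ∃ s ∈ S, ¬ s ≤ c := by
  by_contra hc; push_neg at hc; exact h (sSup_le hc)

private lemma jc_trunc {f : 𝕀 → 𝕀} (hf : JoinCont f) (t₀ : 𝕀) :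
    JoinCont (fun t => if t ≤ t₀ then f t else f t₀) := by
  have mono := mono_of_jc hf
  intro S
  show (if sSup S ≤ t₀ then f (sSup S) else f t₀) = ⨆ t ∈ S, if t ≤ t₀ then f t else f t₀
  by_cases hs : sSup S ≤ t₀
  · rw [if_pos hs, hf S]
    exact biSup_congr fun t htS => (if_pos ((le_sSup htS).trans hs)).symm
  · obtain ⟨s₁, hs₁S, hs₁⟩ := exists_not_le hs
    rw [if_neg hs]
    refine le_antisymm ?_ (iSup₂_le fun t _ => ?_)
    · have h1 : f t₀ = if s₁ ≤ t₀ then f s₁ else f t₀ := (if_neg hs₁).symm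
      exact h1.le.trans (le_biSup (fun t => if t ≤ t₀ then f t else f t₀) hs₁S)
    · by_cases htt : t ≤ t₀
      · rw [if_pos htt]; exact mono htt
      · rw [if_neg htt]

private lemma jc_cut {f : 𝕀 → 𝕀} (hf : JoinCont f) (t₀ : 𝕀) :
    JoinCont (fun t => if t ≤ t₀ then (0 : 𝕀) else f t) := by
  have mono := mono_of_jc hf
  intro S
  show (if sSup S ≤ t₀ then (0:𝕀) else f (sSup S)) = ⨆ t ∈ S, if t ≤ t₀ then (0:𝕀) else f t
  by_cases hs : sSup S ≤ t₀
  · rw [if_pos hs]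
    refine (le_antisymm (iSup₂_le fun t htS => ?_) (I_zero_le _)).symm
    rw [if_pos ((le_sSup htS).trans hs)]
  · obtain ⟨s₁, hs₁S, hs₁⟩ := exists_not_le hs
    rw [if_neg hs, hf S]
    refine le_antisymm (iSup₂_le fun t htS => ?_) (iSup₂_le fun t htS => ?_)
    · by_cases htt : t ≤ t₀
      · have h1 : f t ≤ (fun t => if t ≤ t₀ then (0:𝕀) else f t) s₁ := by
          simp only [if_neg hs₁]
          exact mono (htt.trans (not_le.mp hs₁).le)
        exact h1.trans (le_biSup (fun t => if t ≤ t₀ then (0:𝕀) else f t) hs₁S)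
      · have h1 : f t = (fun t => if t ≤ t₀ then (0:𝕀) else f t) t := by
          simp only [if_neg htt]
        rw [h1]
        exact le_biSup (fun t => if t ≤ t₀ then (0:𝕀) else f t) htS
    · by_cases htt : t ≤ t₀
      · rw [if_pos htt]; exact (I_zero_le _).trans (le_biSup f htS)
      · rw [if_neg htt]; exact le_biSup f htS

/-- the join-prime elements of `ℒ∨(𝕀)` are exactly the prime one-step
functions `h_{x,y}` with `x < 1` and `0 < y`. -/
theorem statement19 (f : 𝕀 → 𝕀) (hf : JoinCont f) :
    ((f ≠ fun _ => 0) ∧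
      ∀ g h : 𝕀 → 𝕀, JoinCont g → JoinCont h →
        (∀ x, f x ≤ g x ⊔ h x) → (∀ x, f x ≤ g x) ∨ (∀ x, f x ≤ h x)) ↔
    (∃ x y : 𝕀, x < 1 ∧ 0 < y ∧ f = oneStep x y) := by
  constructor
  · rintro ⟨hne, hpr⟩
    have mono := mono_of_jc hf
    have fx0 : f (sSup {t | f t = 0}) = 0 := by
      refine le_antisymm ?_ (I_zero_le _)
      rw [hf {t | f t = 0}]
      exact iSup₂_le fun t ht => le_of_eq ht
    set x : 𝕀 := sSup {t | f t = 0} with hx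
    have fzero_of_le : ∀ t, t ≤ x → f t = 0 :=
      fun t ht => le_antisymm (fx0 ▸ mono ht) (I_zero_le _)
    have x1 : x < 1 := by
      rcases eq_or_lt_of_le (unitInterval.le_one' : x ≤ 1) with h1 | h1
      · exfalso; apply hne; funext t
        exact fzero_of_le t (le_trans unitInterval.le_one' h1.ge)
      · exact h1
    have ypos : 0 < f 1 := by
      rcases Function.ne_iff.mp hne with ⟨t, ht⟩
      exact (lt_of_le_of_ne (I_zero_le _) (Ne.symm ht)).trans_le (mono unitInterval.le_one')
    have key : ∀ t₀, x < t₀ → f t₀ = f 1 := by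
      intro t₀ ht₀
      by_contra hne1
      have hlt : f t₀ < f 1 := lt_of_le_of_ne (mono unitInterval.le_one') hne1
      have h1t₀ : ¬ (1 : 𝕀) ≤ t₀ := fun h1 => absurd (mono h1) hlt.not_ge
      have ft₀pos : 0 < f t₀ := by
        refine lt_of_le_of_ne (I_zero_le _) fun h0 => ?_
        exact absurd (le_sSup (show t₀ ∈ {t | f t = 0} from h0.symm)) (not_le.mpr ht₀)
      have hle : ∀ t, f t ≤ (fun t => if t ≤ t₀ then f t else f t₀) t ⊔
          (fun t => if t ≤ t₀ then (0:𝕀) else f t) t := by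
        intro t
        by_cases htt : t ≤ t₀
        · simp only [if_pos htt]; exact le_sup_left
        · simp only [if_neg htt]; exact le_sup_right
      rcases hpr _ _ (jc_trunc hf t₀) (jc_cut hf t₀) hle with hc | hc
      · have h2 := hc 1
        simp only [if_neg h1t₀] at h2
        exact absurd h2 (not_le.mpr hlt)
      · have h2 := hc t₀
        simp only [if_pos (le_refl t₀)] at h2
        exact absurd h2 (not_le.mpr ft₀pos)
    refine ⟨x, f 1, x1, ypos, funext fun t => ?_⟩
    simp only [oneStep]
    by_cases htx : t ≤ x
    · rw [if_pos htx]; exact fzero_of_le t htx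
    · rw [if_neg htx]; exact key t (not_le.mp htx)
  · rintro ⟨x, y, hx1, hy, rfl⟩
    constructor
    · intro h0
      have h1 := congrFun h0 1
      simp only [oneStep, if_neg (not_le.mpr hx1)] at h1
      exact absurd h1 (ne_of_gt hy)
    · intro g h hg hhc hle
      have monog := mono_of_jc hg
      have monoh := mono_of_jc hhc
      by_cases hcase : ∀ t, x < t → y ≤ g t
      · left; intro t
        simp only [oneStep]
        by_cases htx : t ≤ x
        · rw [if_pos htx]; exact I_zero_le _
        · rw [if_neg htx]; exact hcase t (not_le.mp htx)
      · push_neg at hcase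
        obtain ⟨t₁, ht₁, hgt₁⟩ := hcase
        right; intro t
        simp only [oneStep]
        by_cases htx : t ≤ x
        · rw [if_pos htx]; exact I_zero_le _
        · rw [if_neg htx]
          have hmin : x < min t t₁ := lt_min (not_le.mp htx) ht₁
          have h2 := hle (min t t₁)
          simp only [oneStep, if_neg (not_le.mpr hmin)] at h2
          rcases le_sup_iff.mp h2 with hca | hca
          · exact absurd (hca.trans (monog (min_le_right t t₁))) (not_le.mpr hgt₁)
          · exact hca.trans (monoh (min_le_left t t₁))


end
end
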